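/- arXiv:1406.0690 — 7 statements merged into one kernel-verified Lean document; each statement's English description precedes it below -/
import Mathlib

section
/- Extended fooling set technique: Let L be a language over a finite alphabet Σ and let S = {(x_1,y_1), …, (x_n,y_n)} be a set of n pairs of words such that x_i y_i ∈ L for every i = 1,…,n, and such that for all i ≠ j, at least one of the two words x_i y_j and x_j y_i is not in L. Then every nondeterministic finite automaton recognizing L has at least n states. -/
/-- An accepting run of an NFA on a word `w`: a sequence of `|w|+1` states starting
in an initial state, ending in an accepting state, and following the transitions. -/
def NFA.IsAcceptingRun {α σ : Type*} (M : NFA α σ) (w : List α)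
    (r : Fin (w.length + 1) → σ) : Prop :=
  r 0 ∈ M.start ∧ r (Fin.last w.length) ∈ M.accept ∧
    ∀ i : Fin w.length, r i.succ ∈ M.step (r i.castSucc) (w.get i)

/-- An NFA is unambiguous (a UFA) if every word has at most one accepting run. -/
def NFA.Unambiguous {α σ : Type*} (M : NFA α σ) : Prop :=
  ∀ (w : List α) (r₁ r₂ : Fin (w.length + 1) → σ),
    M.IsAcceptingRun w r₁ → M.IsAcceptingRun w r₂ → r₁ = r₂

/-- A deterministic NFA (a DFA with a possibly partial transition function):
exactly one initial state and at most one successor per state and letter. -/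
def NFA.Deterministic {α σ : Type*} (M : NFA α σ) : Prop :=
  (∃ q₀, M.start = {q₀}) ∧ ∀ q a, (M.step q a).Subsingleton

/-- Minimal number of states of an NFA recognizing `L` (`nN(L)`). -/
noncomputable def nN {α : Type} (L : Language α) : ℕ :=
  sInf {n | ∃ (σ : Type) (inst : Fintype σ) (M : NFA α σ),
    @Fintype.card σ inst = n ∧ M.accepts = L}

/-- Minimal number of states of a DFA (partial transition function allowed)
recognizing `L` (`nD(L)`). -/
noncomputable def nD {α : Type} (L : Language α) : ℕ :=
  sInf {n | ∃ (σ : Type) (inst : Fintype σ) (M : NFA α σ),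
    M.Deterministic ∧ @Fintype.card σ inst = n ∧ M.accepts = L}

/-- Minimal number of states of an unambiguous NFA recognizing `L` (`nU(L)`). -/
noncomputable def nU {α : Type} (L : Language α) : ℕ :=
  sInf {n | ∃ (σ : Type) (inst : Fintype σ) (M : NFA α σ),
    M.Unambiguous ∧ @Fintype.card σ inst = n ∧ M.accepts = L}

/-- Upward closure: all superwords (w.r.t. the scattered-subword ordering
`List.Sublist`) of words of `L`. -/
def upClosure {α : Type} (L : Language α) : Language α := {x | ∃ y ∈ L, y.Sublist x}

/-- Downward closure: all subwords of words of `L`. -/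
def downClosure {α : Type} (L : Language α) : Language α := {x | ∃ y ∈ L, x.Sublist y}

/-- Upward interior: words all of whose superwords are in `L`. -/
def upInterior {α : Type} (L : Language α) : Language α := {x | ∀ y, x.Sublist y → y ∈ L}

/-- Downward interior: words all of whose subwords are in `L`. -/
def downInterior {α : Type} (L : Language α) : Language α := {x | ∀ y, y.Sublist x → y ∈ L}

namespace NFA

variable {α σ : Type*} (M : NFA α σ)

theorem append_mem_accepts_iff {x y : List α} :
    x ++ y ∈ M.accepts ↔ ∃ p ∈ M.eval x, y ∈ M.acceptsFrom {p} := by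
  rw [accepts_eq_acceptsFrom_start, append_mem_acceptsFrom]
  constructor
  · rintro ⟨q, hq, hxy⟩
    obtain ⟨p, hp, hpq⟩ := mem_evalFrom_iff_exists.1 hxy
    exact ⟨p, hp, q, hq, hpq⟩
  · rintro ⟨p, hp, q, hq, hpq⟩
    exact ⟨q, hq, mem_evalFrom_iff_exists.2 ⟨p, hp, hpq⟩⟩

/-- The injection picks a middle state of an accepting run on `x i ++ y i`; if two pairs shared
one, the runs could be crossed to accept both `x i ++ y j` and `x j ++ y i`. -/
theorem exists_injective_of_fooling {ι : Type*} (x y : ι → List α)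
    (hmem : ∀ i, x i ++ y i ∈ M.accepts)
    (hfool : ∀ i j, i ≠ j → x i ++ y j ∉ M.accepts ∨ x j ++ y i ∉ M.accepts) :
    ∃ f : ι → σ, Function.Injective f := by
  choose f hfx hfy using fun i ↦ (M.append_mem_accepts_iff).1 (hmem i)
  have cross : ∀ i j, f i = f j → x i ++ y j ∈ M.accepts := fun i j h ↦
    (M.append_mem_accepts_iff).2 ⟨f i, hfx i, h ▸ hfy j⟩
  refine ⟨f, fun i j h ↦ ?_⟩
  by_contra hne
  rcases hfool i j hne with hij | hji
  · exact hij (cross i j h)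
  · exact hji (cross j i h.symm)

end NFA

theorem extended_fooling_set_general {α : Type} (L : Language α) (n : ℕ)
    (x y : Fin n → List α)
    (hmem : ∀ i, x i ++ y i ∈ L)
    (hfool : ∀ i j, i ≠ j → x i ++ y j ∉ L ∨ x j ++ y i ∉ L)
    (σ : Type) [Fintype σ] (M : NFA α σ) (hM : M.accepts = L) :
    n ≤ Fintype.card σ := by
  subst hM
  obtain ⟨f, hf⟩ := M.exists_injective_of_fooling x y hmem hfool
  simpa using Fintype.card_le_of_injective f hf

/-- Extended fooling set technique: if `S = {(x i, y i)}_{i < n}` is a fooling set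
for `L` (each `x i ++ y i ∈ L`, and for `i ≠ j` at least one of `x i ++ y j`,
`x j ++ y i` is not in `L`), then every NFA recognizing `L` has at least `n` states. -/
theorem extended_fooling_set {α : Type} [Fintype α] (L : Language α) (n : ℕ)
    (x y : Fin n → List α)
    (hmem : ∀ i, x i ++ y i ∈ L)
    (hfool : ∀ i j, i ≠ j → x i ++ y j ∉ L ∨ x j ++ y i ∉ L)
    (σ : Type) [Fintype σ] (M : NFA α σ) (hM : M.accepts = L) :
    n ≤ Fintype.card σ :=
  extended_fooling_set_general L n x y hmem hfool σ M hM
end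

section
/- State complexity of upward closure, upper bound: if L ⊆ Σ* is a regular language recognized by an NFA with n states, where n ≥ 2, then the upward closure ↑L is recognized by a DFA with at most 2^{n−2} + 1 states, i.e., nD(↑L) ≤ 2^{n−2} + 1. -/
/-! Adding a self-loop on every letter at every state of `M` gives an NFA for `↑L` whose subset
construction only ever enlarges the current subset. Hence every reachable subset contains an
initial state `q₀`, and once it meets an accepting state `q_f` it stays accepting. Merging all
accepting subsets into one sink leaves the subsets containing `q₀` and avoiding `q_f`: at most
`2^(n-2)` of them, plus the sink. -/

namespace NFA

variable {α σ : Type*} (M : NFA α σ)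

def saturate : NFA α σ where
  step q a := insert q (M.step q a)
  start := M.start
  accept := M.accept

theorem saturate_stepSet (S : Set σ) (a : α) : M.saturate.stepSet S a = S ∪ M.stepSet S a := by
  ext q
  simp [mem_stepSet, saturate, and_or_left, exists_or]

theorem subset_saturate_stepSet (S : Set σ) (a : α) : S ⊆ M.saturate.stepSet S a := by
  rw [saturate_stepSet]
  exact Set.subset_union_left

theorem subset_saturate_evalFrom (S : Set σ) (x : List α) : S ⊆ M.saturate.evalFrom S x := by
  induction x generalizing S with
  | nil => exact subset_rfl
  | cons a x ih => exact (M.subset_saturate_stepSet S a).trans (ih _)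

theorem start_subset_saturate_eval (x : List α) : M.start ⊆ M.saturate.eval x :=
  M.subset_saturate_evalFrom M.start x

theorem mem_saturate_evalFrom {S : Set σ} {x : List α} {q : σ} :
    q ∈ M.saturate.evalFrom S x ↔ ∃ y, y.Sublist x ∧ q ∈ M.evalFrom S y := by
  induction x generalizing S with
  | nil => simp
  | cons a x ih =>
    rw [evalFrom_cons, ih]
    simp only [saturate_stepSet, evalFrom_union, Set.mem_union, List.sublist_cons_iff]
    constructor
    · rintro ⟨y, hy, hq | hq⟩
      · exact ⟨y, Or.inl hy, hq⟩
      · exact ⟨a :: y, Or.inr ⟨y, rfl, hy⟩, hq⟩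
    · rintro ⟨y, hy | ⟨y, rfl, hy⟩, hq⟩
      · exact ⟨y, hy, Or.inl hq⟩
      · exact ⟨y, hy, Or.inr hq⟩

open scoped Classical in
noncomputable def upClosureState (T : Set σ) :
    Option {T : Set σ // M.start ⊆ T ∧ Disjoint T M.accept} :=
  if h : M.start ⊆ T ∧ Disjoint T M.accept then some ⟨T, h⟩ else none

/-- The subset construction for `M.saturate`, with all subsets meeting `M.accept` merged into
the accepting sink `none`. Subsets not containing `M.start` are sent to `none` too, but they are
never reached. -/
noncomputable def toUpClosureDFA :
    DFA α (Option {T : Set σ // M.start ⊆ T ∧ Disjoint T M.accept}) where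
  step q a := q.bind fun T => M.upClosureState (M.saturate.stepSet T.1 a)
  start := M.upClosureState M.start
  accept := {none}

variable {M}

theorem upClosureState_eq_none {T : Set σ} (hT : M.start ⊆ T) :
    M.upClosureState T = none ↔ ¬Disjoint T M.accept := by
  simp [upClosureState, hT]

theorem toUpClosureDFA_step_upClosureState {T : Set σ} (hT : M.start ⊆ T) (a : α) :
    M.toUpClosureDFA.step (M.upClosureState T) a = M.upClosureState (M.saturate.stepSet T a) := by
  by_cases h : Disjoint T M.accept
  · simp [toUpClosureDFA, upClosureState, hT, h]
  · have hT' := hT.trans (M.subset_saturate_stepSet T a)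
    rw [(upClosureState_eq_none hT).2 h, (upClosureState_eq_none hT').2
      fun h' => h (h'.mono_left (M.subset_saturate_stepSet T a))]
    rfl

theorem toUpClosureDFA_eval (x : List α) :
    M.toUpClosureDFA.eval x = M.upClosureState (M.saturate.eval x) := by
  induction x using List.reverseRecOn with
  | nil => rfl
  | append_singleton x a ih =>
    rw [DFA.eval_append_singleton, ih, NFA.eval_append_singleton,
      toUpClosureDFA_step_upClosureState (M.start_subset_saturate_eval x)]

end NFA

section UpClosure

variable {α : Type} {σ : Type*} (M : NFA α σ)

theorem NFA.saturate_accepts : M.saturate.accepts = upClosure M.accepts := by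
  ext x
  simp only [NFA.mem_accepts, NFA.mem_saturate_evalFrom, upClosure]
  constructor
  · rintro ⟨q, hq, y, hy, hqy⟩
    exact ⟨y, ⟨q, hq, hqy⟩, hy⟩
  · rintro ⟨y, ⟨q, hq, hqy⟩, hy⟩
    exact ⟨q, hq, y, hy, hqy⟩

theorem NFA.toUpClosureDFA_accepts : M.toUpClosureDFA.accepts = upClosure M.accepts := by
  ext x
  rw [← NFA.saturate_accepts, DFA.mem_accepts, NFA.toUpClosureDFA_eval, NFA.mem_accepts,
    show M.toUpClosureDFA.accept = {none} from rfl, Set.mem_singleton_iff,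
    NFA.upClosureState_eq_none (M.start_subset_saturate_eval x), Set.not_disjoint_iff]
  exact ⟨fun ⟨q, hx, hq⟩ => ⟨q, hq, hx⟩, fun ⟨q, hq, hx⟩ => ⟨q, hx, hq⟩⟩

end UpClosure

theorem Nat.card_set {X : Type*} [Finite X] : Nat.card (Set X) = 2 ^ Nat.card X := by
  classical
  cases nonempty_fintype X
  simp [Nat.card_eq_fintype_card, Fintype.card_set]

theorem Nat.card_subtype_ne_and_ne {σ : Type*} [Finite σ] {a b : σ} (h : a ≠ b) :
    Nat.card {x // x ≠ a ∧ x ≠ b} = Nat.card σ - 2 := by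
  have hcompl := Set.ncard_add_ncard_compl ({a, b} : Set σ)
  rw [Set.ncard_pair h] at hcompl
  rw [← hcompl, Nat.add_sub_cancel_left, ← Nat.card_coe_set_eq]
  exact Nat.card_congr (Equiv.subtypeEquivRight (by simp))

theorem Nat.card_subtype_mem_and_notMem_le {σ : Type*} [Finite σ] (a b : σ) :
    Nat.card {T : Set σ // a ∈ T ∧ b ∉ T} ≤ 2 ^ (Nat.card σ - 2) := by
  rcases eq_or_ne a b with rfl | h
  · simp
  rw [← Nat.card_subtype_ne_and_ne h, ← Nat.card_set]
  refine Nat.card_le_card_of_injective (fun T => (Subtype.val ⁻¹' T.1 : Set {x // x ≠ a ∧ x ≠ b}))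
    fun T U hTU => Subtype.ext <| Set.ext fun x => ?_
  by_cases hxa : x = a
  · subst hxa
    exact iff_of_true T.2.1 U.2.1
  by_cases hxb : x = b
  · subst hxb
    exact iff_of_false T.2.2 U.2.2
  exact Set.ext_iff.1 hTU ⟨x, hxa, hxb⟩

theorem nD_le_natCard {α τ : Type} [Finite τ] (D : DFA α τ) : nD D.accepts ≤ Nat.card τ := by
  have := Fintype.ofFinite τ
  exact Nat.sInf_le ⟨τ, this, D.toNFA, ⟨⟨D.start, rfl⟩, fun _ _ => Set.subsingleton_singleton⟩,
    Nat.card_eq_fintype_card.symm, D.toNFA_correct⟩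

theorem nD_zero_le_one {α : Type} : nD (0 : Language α) ≤ 1 := by
  have hD : (⟨fun _ _ => (), (), ∅⟩ : DFA α Unit).accepts = 0 := rfl
  simpa [hD] using nD_le_natCard (⟨fun _ _ => (), (), ∅⟩ : DFA α Unit)

theorem nD_upClosure_le_general {α σ : Type} [Fintype σ] (M : NFA α σ) (n : ℕ)
    (hcard : Fintype.card σ = n) :
    nD (upClosure M.accepts) ≤ 2 ^ (n - 2) + 1 := by
  rcases Set.eq_empty_or_nonempty M.accepts with hL | ⟨x, hx⟩
  · have hup : upClosure M.accepts = 0 := Set.eq_empty_of_forall_notMem fun _ ⟨_, hy, _⟩ =>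
      Set.eq_empty_iff_forall_notMem.1 hL _ hy
    exact hup ▸ nD_zero_le_one.trans (Nat.le_add_left 1 _)
  obtain ⟨qf, hqf, hx⟩ := NFA.mem_accepts.1 hx
  obtain ⟨q0, hq0, -⟩ := NFA.mem_evalFrom_iff_exists.1 hx
  calc nD (upClosure M.accepts) = nD M.toUpClosureDFA.accepts := by
        rw [NFA.toUpClosureDFA_accepts]
    _ ≤ Nat.card {T : Set σ // M.start ⊆ T ∧ Disjoint T M.accept} + 1 :=
        (nD_le_natCard _).trans_eq Finite.card_option
    _ ≤ Nat.card {T : Set σ // q0 ∈ T ∧ qf ∉ T} + 1 := by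
        gcongr
        exact Nat.card_le_card_of_injective
          (Subtype.impEmbedding _ _ fun T hT => ⟨hT.1 hq0, hT.2.notMem_of_mem_right hqf⟩)
          (Subtype.impEmbedding _ _ _).injective
    _ ≤ 2 ^ (n - 2) + 1 := by
        rw [← hcard, ← Nat.card_eq_fintype_card]
        gcongr
        exact Nat.card_subtype_mem_and_notMem_le q0 qf

/-- Upper bound on the state complexity of upward closure: if `L` is recognized by
an NFA with `n ≥ 2` states, then `nD(↑L) ≤ 2^(n-2) + 1`. -/
theorem nD_upClosure_le {α σ : Type} [Fintype α] [Fintype σ] (M : NFA α σ) (n : ℕ)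
    (hcard : Fintype.card σ = n) (hn : 2 ≤ n) :
    nD (upClosure M.accepts) ≤ 2 ^ (n - 2) + 1 :=
  nD_upClosure_le_general M n hcard
end

section
/- Tightness of the upward-closure bound: for every k ≥ 1, over the alphabet Σ_k = {a_1,…,a_k}, the language E_k = {a a | a ∈ Σ_k} = {a_1 a_1, …, a_k a_k} satisfies nN(E_k) = nD(E_k) = k + 2 and nD(↑E_k) = 2^k + 1. (Note ↑E_k is the set of all words over Σ_k in which some letter occurs at least twice.) -/
/-!
For `E = {aa | a ∈ Σ}` a DFA reads a letter, remembers it and checks that the second letter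
repeats it; `↑E` consists of the words with a repeated letter, and a DFA remembers the set of
letters read so far, jumping to an accepting sink at the first repetition.

For the lower bound on NFAs for `E`, the prefixes `ε`, `a₀a₀` and `a` (`a ∈ Σ`) with suffixes
`a₀a₀`, `ε` and `a` form a fooling set of size `|Σ| + 2`. For `↑E`, the
`2 ^ |Σ|` repetition-free enumerations of the subsets of `Σ`, together with `a₀a₀`, have
pairwise distinct nonempty left quotients, so they reach pairwise distinct states of any
partial DFA.
-/

open Function

variable {α σ ι : Type*}

def IsFoolingSet (L : Language α) (x y : ι → List α) : Prop :=
  (∀ i, x i ++ y i ∈ L) ∧ Pairwise fun i j => x i ++ y j ∉ L ∨ x j ++ y i ∉ L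

namespace NFA

variable (M : NFA α σ)

theorem notMem_acceptsFrom_empty (x : List α) : x ∉ M.acceptsFrom ∅ := by
  simp [mem_acceptsFrom, mem_evalFrom_iff_exists (S := ∅)]

theorem mem_acceptsFrom_iff_exists {S : Set σ} {x : List α} :
    x ∈ M.acceptsFrom S ↔ ∃ s ∈ S, x ∈ M.acceptsFrom {s} := by
  rw [mem_acceptsFrom]
  simp only [mem_evalFrom_iff_exists (S := S), mem_acceptsFrom]
  exact ⟨fun ⟨f, hf, s, hs, h⟩ => ⟨s, hs, f, hf, h⟩,
    fun ⟨s, hs, f, hf, h⟩ => ⟨f, hf, s, hs, h⟩⟩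

theorem leftQuotient_accepts (x : List α) :
    M.accepts.leftQuotient x = M.acceptsFrom (M.eval x) := by
  ext y
  exact append_mem_acceptsFrom M

theorem card_le_of_isFoolingSet [Fintype ι] [Fintype σ] {x y : ι → List α}
    (h : IsFoolingSet M.accepts x y) : Fintype.card ι ≤ Fintype.card σ := by
  have hrun : ∀ i, ∃ q ∈ M.eval (x i), y i ∈ M.acceptsFrom {q} := fun i =>
    M.mem_acceptsFrom_iff_exists.1 ((append_mem_acceptsFrom M).1 (h.1 i))
  choose q hq hqy using hrun
  have hcross {i j : ι} (hij : q i = q j) : x i ++ y j ∈ M.accepts :=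
    (append_mem_acceptsFrom M).2 (M.mem_acceptsFrom_iff_exists.2 ⟨q i, hq i, hij ▸ hqy j⟩)
  refine Fintype.card_le_of_injective q fun i j hij => by_contra fun hne => ?_
  exact (h.2 hne).elim (· (hcross hij)) (· (hcross hij.symm))

variable {M}

theorem Deterministic.evalFrom_subsingleton (hM : M.Deterministic) {S : Set σ}
    (hS : S.Subsingleton) (x : List α) : (M.evalFrom S x).Subsingleton := by
  induction x generalizing S with
  | nil => exact hS
  | cons a x ih =>
    refine ih ?_
    obtain rfl | ⟨s, rfl⟩ := hS.eq_empty_or_singleton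
    · simp
    · simpa using hM.2 s a

theorem Deterministic.card_le_of_leftQuotient_injective [Fintype ι] [Fintype σ]
    (hM : M.Deterministic) {x : ι → List α} (hne : ∀ i, ∃ z, x i ++ z ∈ M.accepts)
    (hinj : Injective (M.accepts.leftQuotient ∘ x)) : Fintype.card ι ≤ Fintype.card σ := by
  have hstate : ∀ i, ∃ q, M.eval (x i) = {q} := fun i => by
    obtain ⟨z, hz⟩ := hne i
    obtain ⟨q, hq, -⟩ := M.mem_acceptsFrom_iff_exists.1 ((append_mem_acceptsFrom M).1 hz)
    obtain ⟨q₀, hq₀⟩ := hM.1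
    have hsub := hM.evalFrom_subsingleton (hq₀ ▸ Set.subsingleton_singleton) (x i)
    exact ⟨q, hsub.eq_singleton_of_mem hq⟩
  choose q hq using hstate
  refine Fintype.card_le_of_injective q fun i j hij => hinj ?_
  simp only [comp_apply, leftQuotient_accepts, hq, hij]

end NFA

theorem nN_eq {α : Type} {L : Language α} {n : ℕ} {σ₀ : Type} [Fintype σ₀] (M₀ : NFA α σ₀)
    (h₀ : M₀.accepts = L) (hcard : Fintype.card σ₀ = n)
    (hmin : ∀ (σ : Type) [Fintype σ] (M : NFA α σ), M.accepts = L → n ≤ Fintype.card σ) :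
    nN L = n :=
  IsLeast.csInf_eq ⟨⟨σ₀, _, M₀, hcard, h₀⟩, by rintro _ ⟨σ, _, M, rfl, hM⟩; exact hmin σ M hM⟩

theorem nD_eq {α : Type} {L : Language α} {n : ℕ} {σ₀ : Type} [Fintype σ₀] (M₀ : NFA α σ₀)
    (hdet : M₀.Deterministic) (h₀ : M₀.accepts = L) (hcard : Fintype.card σ₀ = n)
    (hmin : ∀ (σ : Type) [Fintype σ] (M : NFA α σ), M.Deterministic → M.accepts = L →
      n ≤ Fintype.card σ) :
    nD L = n :=
  IsLeast.csInf_eq ⟨⟨σ₀, _, M₀, hdet, hcard, h₀⟩,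
    by rintro _ ⟨σ, _, M, hM, rfl, hL⟩; exact hmin σ M hM hL⟩

def letterSquares : Language α := {w | ∃ a : α, w = [a, a]}

theorem mem_letterSquares {w : List α} : w ∈ letterSquares ↔ ∃ a, w = [a, a] := Iff.rfl

section LetterSquares

variable [DecidableEq α]

/-- `none` is the initial state, `some (some a)` records a first letter `a`, and `some none` is
the accepting state. -/
def letterSquaresNFA : NFA α (Option (Option α)) where
  step
    | none, b => {some (some b)}
    | some (some a), b => if b = a then {some none} else ∅
    | some none, _ => ∅
  start := {none}
  accept := {some none}

theorem letterSquaresNFA_deterministic : (letterSquaresNFA : NFA α _).Deterministic := by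
  refine ⟨⟨none, rfl⟩, ?_⟩
  rintro (_ | _ | a) b <;> simp only [letterSquaresNFA]
  · exact Set.subsingleton_singleton
  · exact Set.subsingleton_empty
  · split_ifs
    exacts [Set.subsingleton_singleton, Set.subsingleton_empty]

theorem mem_letterSquaresNFA_acceptsFrom_final {w : List α} :
    w ∈ letterSquaresNFA.acceptsFrom {some none} ↔ w = [] := by
  rcases w with _ | ⟨b, w⟩
  · simp [letterSquaresNFA]
  · rw [NFA.cons_mem_acceptsFrom, NFA.stepSet_singleton]
    exact iff_of_false (NFA.notMem_acceptsFrom_empty _ w) (List.cons_ne_nil _ _)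

theorem mem_letterSquaresNFA_acceptsFrom_letter {a : α} {w : List α} :
    w ∈ letterSquaresNFA.acceptsFrom {some (some a)} ↔ w = [a] := by
  rcases w with _ | ⟨b, w⟩
  · simp [letterSquaresNFA]
  · rw [NFA.cons_mem_acceptsFrom, NFA.stepSet_singleton]
    change w ∈ letterSquaresNFA.acceptsFrom (if b = a then {some none} else ∅) ↔ _
    split_ifs with h
    · simp [h, mem_letterSquaresNFA_acceptsFrom_final]
    · simpa [h] using NFA.notMem_acceptsFrom_empty _ w

theorem letterSquaresNFA_accepts : (letterSquaresNFA : NFA α _).accepts = letterSquares := by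
  ext (_ | ⟨b, w⟩)
  · simp [NFA.accepts_eq_acceptsFrom_start, letterSquaresNFA, mem_letterSquares]
  · rw [NFA.accepts_eq_acceptsFrom_start, NFA.cons_mem_acceptsFrom,
      show letterSquaresNFA.start = {none} from rfl, NFA.stepSet_singleton]
    change w ∈ letterSquaresNFA.acceptsFrom {some (some b)} ↔ _
    simp [mem_letterSquaresNFA_acceptsFrom_letter, mem_letterSquares]

end LetterSquares

theorem card_add_two_le_of_accepts_letterSquares [Fintype α] [Nonempty α] [Fintype σ]
    {M : NFA α σ} (hM : M.accepts = letterSquares) : Fintype.card α + 2 ≤ Fintype.card σ := by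
  obtain ⟨a₀⟩ := ‹Nonempty α›
  let x : Option (Option α) → List α
    | none => []
    | some none => [a₀, a₀]
    | some (some a) => [a]
  let y : Option (Option α) → List α
    | none => [a₀, a₀]
    | some none => []
    | some (some a) => [a]
  have hfool : IsFoolingSet M.accepts x y := by
    rw [hM]
    refine ⟨by rintro (_ | _ | a) <;> exact ⟨_, rfl⟩, ?_⟩
    rintro (_ | _ | a) (_ | _ | b) hne <;> left <;> simp_all [x, y, mem_letterSquares]
    exact Ne.symm hne
  simpa only [Fintype.card_option] using M.card_le_of_isFoolingSet hfool

def repeatedLetters : Language α := {w | ¬ w.Nodup}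

theorem mem_repeatedLetters {w : List α} : w ∈ repeatedLetters ↔ ¬ w.Nodup := Iff.rfl

theorem upClosure_letterSquares {α : Type} :
    upClosure (letterSquares : Language α) = repeatedLetters := by
  ext w
  simp only [upClosure, letterSquares, repeatedLetters, ← List.exists_duplicate_iff_not_nodup,
    List.duplicate_iff_sublist]
  exact ⟨fun ⟨_, ⟨a, rfl⟩, h⟩ => ⟨a, h⟩, fun ⟨a, h⟩ => ⟨_, ⟨a, rfl⟩, h⟩⟩

section RepeatedLetter

variable [DecidableEq α]

/-- `some S` records the set `S` of (pairwise distinct) letters read so far; `none` is an accepting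
sink, entered at the first repetition. -/
def repeatedLetterNFA : NFA α (Option (Finset α)) where
  step
    | none, _ => {none}
    | some S, b => {if b ∈ S then none else some (insert b S)}
  start := {some ∅}
  accept := {none}

theorem repeatedLetterNFA_deterministic : (repeatedLetterNFA : NFA α _).Deterministic :=
  ⟨⟨some ∅, rfl⟩, by rintro (_ | S) b <;> exact Set.subsingleton_singleton⟩

theorem mem_repeatedLetterNFA_acceptsFrom_sink (w : List α) :
    w ∈ repeatedLetterNFA.acceptsFrom {none} := by
  induction w with
  | nil => simp [repeatedLetterNFA]
  | cons a w ih => simpa [repeatedLetterNFA] using ih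

theorem mem_repeatedLetterNFA_acceptsFrom {S : Finset α} {w : List α} :
    w ∈ repeatedLetterNFA.acceptsFrom {some S} ↔ ¬ (S.toList ++ w).Nodup := by
  induction w generalizing S with
  | nil => simp [repeatedLetterNFA, S.nodup_toList]
  | cons b w ih =>
    rw [List.nodup_middle, NFA.cons_mem_acceptsFrom, NFA.stepSet_singleton]
    change w ∈ repeatedLetterNFA.acceptsFrom {if b ∈ S then none else some (insert b S)} ↔ _
    split_ifs with hb
    · simp [mem_repeatedLetterNFA_acceptsFrom_sink, hb]
    · rw [ih, ((S.toList_insert hb).append_right w).nodup_iff, List.cons_append]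

theorem repeatedLetterNFA_accepts : (repeatedLetterNFA : NFA α _).accepts = repeatedLetters := by
  ext w
  change w ∈ repeatedLetterNFA.acceptsFrom {some ∅} ↔ _
  simp [mem_repeatedLetterNFA_acceptsFrom, mem_repeatedLetters]

end RepeatedLetter

theorem two_pow_card_add_one_le_of_accepts_repeatedLetters [Fintype α] [Nonempty α] [Fintype σ]
    {M : NFA α σ} (hdet : M.Deterministic) (hM : M.accepts = repeatedLetters) :
    2 ^ Fintype.card α + 1 ≤ Fintype.card σ := by
  obtain ⟨a₀⟩ := ‹Nonempty α›
  let x : Option (Finset α) → List α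
    | none => [a₀, a₀]
    | some S => S.toList
  have hne (i) : ∃ z, x i ++ z ∈ M.accepts := by
    refine ⟨[a₀, a₀], ?_⟩
    rcases i with _ | S <;> simp [x, hM, mem_repeatedLetters, List.nodup_append]
  have hinj : Injective (M.accepts.leftQuotient ∘ x) := by
    rintro (_ | S) (_ | T) h <;> simp only [comp_apply, x, hM] at h
    · rfl
    · simpa [mem_repeatedLetters, T.nodup_toList] using congrArg (fun L : Language α => [] ∈ L) h
    · simpa [mem_repeatedLetters, S.nodup_toList] using congrArg (fun L : Language α => [] ∈ L) h
    · congr 1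
      ext a
      -- the suffix `[a]` is accepted after `S.toList` iff `a ∈ S`
      simpa [mem_repeatedLetters, List.nodup_append, S.nodup_toList, T.nodup_toList]
        using congrArg (fun L : Language α => [a] ∈ L) h
  simpa using hdet.card_le_of_leftQuotient_injective hne hinj

/-- Tightness of the upward-closure bound: over `Σ_k = Fin k` (`k ≥ 1`), the
language `E_k = { aa | a ∈ Σ_k }` satisfies `nN(E_k) = nD(E_k) = k + 2` and
`nD(↑E_k) = 2^k + 1`. -/
theorem upClosure_bound_tight (k : ℕ) (hk : 1 ≤ k) (E : Language (Fin k))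
    (hE : E = {w | ∃ a : Fin k, w = [a, a]}) :
    nN E = k + 2 ∧ nD E = k + 2 ∧ nD (upClosure E) = 2 ^ k + 1 := by
  obtain rfl : E = letterSquares := hE
  have : Nonempty (Fin k) := ⟨⟨0, hk⟩⟩
  have hlower (σ : Type) [Fintype σ] (M : NFA (Fin k) σ) (hM : M.accepts = letterSquares) :
      k + 2 ≤ Fintype.card σ := by
    simpa using card_add_two_le_of_accepts_letterSquares hM
  refine ⟨nN_eq _ letterSquaresNFA_accepts (by simp) hlower,
    nD_eq _ letterSquaresNFA_deterministic letterSquaresNFA_accepts (by simp)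
      fun σ _ M _ => hlower σ M, ?_⟩
  rw [upClosure_letterSquares]
  exact nD_eq _ repeatedLetterNFA_deterministic repeatedLetterNFA_accepts (by simp)
    fun σ _ M hdet hM => by simpa using two_pow_card_add_one_le_of_accepts_repeatedLetters hdet hM
end

section
/- State complexity of downward closure, upper bound: if L ⊆ Σ* is recognized by an NFA with n states having a single initial state, then the downward closure ↓L is recognized by a DFA with at most 2^{n−1} states, i.e., nD(↓L) ≤ 2^{n−1}. -/
/-!
A word `w` lies in `↓L(M)` iff some superword of `w` is accepted, so we run the subset
construction on the sets `E(w)` of states reached by superwords of `w`. Since inserting letters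
anywhere is allowed, `E(w ++ [a])` is the reachability closure of the `a`-successors of `E(w)`;
in particular each `E(w)` is closed under reachability and lies inside the closure `R` of the
start state. A closed subset of `R` that contains the start state `q₀` is `R` itself, so the
nonempty states of this DFA other than `R` all avoid `q₀`: together with `R` they number at
most `2^(n-1)`, and the empty state is a sink that a partial DFA may drop.
-/

theorem Set.natCard_le_two_pow_card_sub_one {σ : Type} [Fintype σ] (q₀ : σ)
    (F : Set (Set σ)) (hne : ∀ X ∈ F, X.Nonempty)
    (huniq : ∀ X ∈ F, ∀ Y ∈ F, q₀ ∈ X → q₀ ∈ Y → X = Y) :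
    Nat.card F ≤ 2 ^ (Fintype.card σ - 1) := by
  classical
  let code : F → Set {x // x ≠ q₀} := fun X => if q₀ ∈ X.1 then ∅ else Subtype.val ⁻¹' X.1
  have code_nonempty :
      ∀ X : F, q₀ ∉ X.1 → (Subtype.val ⁻¹' X.1 : Set {x // x ≠ q₀}).Nonempty := by
    intro X hX
    obtain ⟨p, hp⟩ := hne X X.2
    exact ⟨⟨p, fun h => hX (h ▸ hp)⟩, hp⟩
  have code_injective : Function.Injective code := by
    intro X Y h
    by_cases hX : q₀ ∈ X.1 <;> by_cases hY : q₀ ∈ Y.1 <;>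
      simp only [code, hX, hY, if_true, if_false] at h
    · exact Subtype.ext (huniq X X.2 Y Y.2 hX hY)
    · exact absurd h.symm (code_nonempty Y hY).ne_empty
    · exact absurd h (code_nonempty X hX).ne_empty
    · refine Subtype.ext (Set.ext fun p => ?_)
      by_cases hp : p = q₀
      · subst hp; simp [hX, hY]
      · simpa using Set.ext_iff.mp h ⟨p, hp⟩
  calc Nat.card F ≤ Nat.card (Set {x // x ≠ q₀}) :=
        Nat.card_le_card_of_injective code code_injective
    _ = 2 ^ (Fintype.card σ - 1) := by
      rw [Nat.card_eq_fintype_card, Fintype.card_set, Fintype.card_subtype_compl,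
        Fintype.card_subtype_eq]

theorem nD_accepts_le_natCard {α τ : Type} [Finite τ] (N : NFA α τ) (hN : N.Deterministic) :
    nD N.accepts ≤ Nat.card τ := by
  have := Fintype.ofFinite τ
  exact Nat.sInf_le ⟨τ, inferInstance, N, hN, Nat.card_eq_fintype_card.symm, rfl⟩

namespace DFA

variable {α β : Type} (D : DFA α β)

structure IsClosedModSink (sink : β) (S : Set β) : Prop where
  step_sink : ∀ a, D.step sink a = sink
  sink_notMem : sink ∉ S
  sink_notMem_accept : sink ∉ D.accept
  start_mem : D.start ∈ S
  step_mem : ∀ b ∈ S, ∀ a, D.step b a ≠ sink → D.step b a ∈ S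

def restrict (S : Set β) : NFA α S where
  step b a := {c | c.1 = D.step b.1 a}
  start := {c | c.1 = D.start}
  accept := {c | c.1 ∈ D.accept}

variable {D} {sink : β} {S : Set β}

theorem restrict_deterministic (hstart : D.start ∈ S) : (D.restrict S).Deterministic := by
  refine ⟨⟨⟨D.start, hstart⟩, ?_⟩, fun _ _ _ hc _ hd => Subtype.ext (hc.trans hd.symm)⟩
  ext c
  simp [restrict, Subtype.ext_iff]

namespace IsClosedModSink

theorem eval_eq_or_mem (hS : D.IsClosedModSink sink S) (w : List α) :
    D.eval w = sink ∨ D.eval w ∈ S := by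
  induction w using List.reverseRecOn with
  | nil => exact .inr hS.start_mem
  | append_singleton w a ih =>
    rw [eval_append_singleton]
    rcases ih with h | h
    · exact .inl (h ▸ hS.step_sink a)
    · by_cases ha : D.step (D.eval w) a = sink
      · exact .inl ha
      · exact .inr (hS.step_mem _ h a ha)

theorem mem_restrict_eval (hS : D.IsClosedModSink sink S) (w : List α) (c : S) :
    c ∈ (D.restrict S).eval w ↔ c.1 = D.eval w := by
  induction w using List.reverseRecOn generalizing c with
  | nil => rfl
  | append_singleton w a ih =>
    rw [NFA.eval_append_singleton, NFA.mem_stepSet, eval_append_singleton]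
    constructor
    · rintro ⟨b, hb, hc⟩
      rw [ih] at hb
      rw [← hb]
      exact hc
    · intro hc
      rcases hS.eval_eq_or_mem w with h | h
      · have hc_sink : c.1 = sink := by rw [hc, h, hS.step_sink]
        exact absurd (hc_sink ▸ c.2) hS.sink_notMem
      · exact ⟨⟨_, h⟩, (ih _).2 rfl, hc⟩

theorem restrict_accepts (hS : D.IsClosedModSink sink S) :
    (D.restrict S).accepts = D.accepts := by
  ext w
  simp only [NFA.accepts, hS.mem_restrict_eval]
  constructor
  · rintro ⟨c, hc, hcw⟩
    rw [DFA.mem_accepts, ← hcw]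
    exact hc
  · intro hw
    rcases hS.eval_eq_or_mem w with h | h
    · exact absurd (h ▸ hw) hS.sink_notMem_accept
    · exact ⟨⟨_, h⟩, hw, rfl⟩

theorem nD_accepts_le [Finite S] (hS : D.IsClosedModSink sink S) :
    nD D.accepts ≤ Nat.card S := by
  rw [← hS.restrict_accepts]
  exact nD_accepts_le_natCard _ (restrict_deterministic hS.start_mem)

end IsClosedModSink

end DFA

namespace NFA

variable {α σ : Type} (M : NFA α σ)

theorem evalFrom_mono {S T : Set σ} (h : S ⊆ T) (x : List α) :
    M.evalFrom S x ⊆ M.evalFrom T x := by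
  rw [← Set.union_eq_right.2 h, evalFrom_union]
  exact Set.subset_union_left

def reach (S : Set σ) : Set σ := ⋃ v, M.evalFrom S v

theorem subset_reach (S : Set σ) : S ⊆ M.reach S :=
  Set.subset_iUnion_of_subset [] subset_rfl

theorem stepSet_subset_reach (S : Set σ) (a : α) : M.stepSet S a ⊆ M.reach S :=
  Set.subset_iUnion_of_subset [a] subset_rfl

theorem reach_mono {S T : Set σ} (h : S ⊆ T) : M.reach S ⊆ M.reach T :=
  Set.iUnion_mono fun v => M.evalFrom_mono h v

theorem reach_reach (S : Set σ) : M.reach (M.reach S) = M.reach S := by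
  refine (Set.iUnion_subset fun v => ?_).antisymm (M.subset_reach _)
  rw [reach, evalFrom_iUnion]
  exact Set.iUnion_subset fun u => (M.evalFrom_append S u v) ▸ Set.subset_iUnion _ (u ++ v)

@[simp] theorem reach_empty : M.reach ∅ = ∅ :=
  Set.eq_empty_of_forall_notMem fun _ hp => by
    obtain ⟨v, hv⟩ := Set.mem_iUnion.1 hp
    simpa using mem_evalFrom_iff_exists.1 hv

def superwordEval (w : List α) : Set σ := {p | ∃ y, w.Sublist y ∧ p ∈ M.eval y}

theorem eval_subset_superwordEval {w y : List α} (h : w.Sublist y) :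
    M.eval y ⊆ M.superwordEval w :=
  fun _ hp => ⟨y, h, hp⟩

theorem superwordEval_nil : M.superwordEval [] = M.reach M.start := by
  ext p
  simp [superwordEval, reach, eval]

theorem superwordEval_append_singleton (w : List α) (a : α) :
    M.superwordEval (w ++ [a]) = M.reach (M.stepSet (M.superwordEval w) a) := by
  ext p
  constructor
  · rintro ⟨y, hwy, hp⟩
    obtain ⟨y₁, y₂, rfl, hw, ha⟩ := List.append_sublist_iff.1 hwy
    obtain ⟨s, t, rfl⟩ := List.append_of_mem (List.singleton_sublist.1 ha)
    rw [show y₁ ++ (s ++ a :: t) = y₁ ++ s ++ [a] ++ t by simp, eval, evalFrom_append,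
      ← eval, eval_append_singleton] at hp
    exact Set.mem_iUnion.2 ⟨t, M.evalFrom_mono
      (M.evalFrom_mono (M.eval_subset_superwordEval
        (hw.trans (List.sublist_append_left y₁ s))) [a]) t hp⟩
  · intro hp
    obtain ⟨t, hp⟩ := Set.mem_iUnion.1 hp
    obtain ⟨q, hq, hp⟩ := mem_evalFrom_iff_exists.1 hp
    obtain ⟨r, ⟨y, hwy, hr⟩, hq⟩ := mem_stepSet.1 hq
    refine ⟨y ++ [a] ++ t,
      (hwy.append (List.Sublist.refl [a])).trans (List.sublist_append_left _ t), ?_⟩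
    rw [eval, evalFrom_append, ← eval, eval_append_singleton]
    exact M.evalFrom_mono (Set.singleton_subset_iff.2 (mem_stepSet.2 ⟨r, hr, hq⟩)) t hp

def downClosureDFA : DFA α (Set σ) where
  step S a := M.reach (M.stepSet S a)
  start := M.reach M.start
  accept := {S | ∃ q ∈ S, q ∈ M.accept}

theorem downClosureDFA_eval (w : List α) : M.downClosureDFA.eval w = M.superwordEval w := by
  induction w using List.reverseRecOn with
  | nil => exact M.superwordEval_nil.symm
  | append_singleton w a ih =>
    rw [DFA.eval_append_singleton, ih, superwordEval_append_singleton]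
    rfl

theorem downClosureDFA_accepts : M.downClosureDFA.accepts = downClosure M.accepts := by
  ext w
  rw [DFA.mem_accepts, downClosureDFA_eval]
  constructor
  · rintro ⟨q, ⟨y, hwy, hq⟩, hacc⟩
    exact ⟨y, ⟨q, hacc, hq⟩, hwy⟩
  · rintro ⟨y, ⟨q, hacc, hq⟩, hwy⟩
    exact ⟨q, ⟨y, hwy, hq⟩, hacc⟩

def closedReachSets : Set (Set σ) := {X | X.Nonempty ∧ X ⊆ M.reach M.start ∧ M.reach X ⊆ X}

theorem downClosureDFA_isClosedModSink (h : M.start.Nonempty) :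
    M.downClosureDFA.IsClosedModSink ∅ M.closedReachSets where
  step_sink a := by simp [downClosureDFA]
  sink_notMem h := Set.not_nonempty_empty h.1
  sink_notMem_accept := fun ⟨_, h, _⟩ => h
  start_mem := ⟨h.mono (M.subset_reach _), subset_rfl, (M.reach_reach _).le⟩
  step_mem X hX a hne := by
    have hsub : M.reach (M.stepSet X a) ⊆ X :=
      (M.reach_mono (M.stepSet_subset_reach X a)).trans ((M.reach_reach X).le.trans hX.2.2)
    exact ⟨Set.nonempty_iff_ne_empty.2 hne, hsub.trans hX.2.1, (M.reach_reach _).le⟩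

theorem eq_reach_start_of_mem_closedReachSets {q₀ : σ} (hstart : M.start = {q₀}) {X : Set σ}
    (hX : X ∈ M.closedReachSets) (hq₀ : q₀ ∈ X) : X = M.reach M.start :=
  hX.2.1.antisymm ((M.reach_mono (hstart ▸ Set.singleton_subset_iff.2 hq₀)).trans hX.2.2)

end NFA

theorem nD_downClosure_le_general {α σ : Type} [Fintype σ] (M : NFA α σ) (n : ℕ)
    (hcard : Fintype.card σ = n) (q₀ : σ) (hstart : M.start = {q₀}) :
    nD (downClosure M.accepts) ≤ 2 ^ (n - 1) := by
  subst hcard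
  have hM := M.downClosureDFA_isClosedModSink (hstart ▸ Set.singleton_nonempty q₀)
  have hunique : ∀ X ∈ M.closedReachSets, ∀ Y ∈ M.closedReachSets, q₀ ∈ X → q₀ ∈ Y → X = Y :=
    fun X hX Y hY hqX hqY => (M.eq_reach_start_of_mem_closedReachSets hstart hX hqX).trans
      (M.eq_reach_start_of_mem_closedReachSets hstart hY hqY).symm
  calc nD (downClosure M.accepts) = nD M.downClosureDFA.accepts := by
        rw [M.downClosureDFA_accepts]
    _ ≤ Nat.card M.closedReachSets := hM.nD_accepts_le
    _ ≤ 2 ^ (Fintype.card σ - 1) :=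
        Set.natCard_le_two_pow_card_sub_one q₀ _ (fun X hX => hX.1) hunique

/-- Upper bound on the state complexity of downward closure: if `L` is recognized
by an NFA with `n` states and a single initial state, then `nD(↓L) ≤ 2^(n-1)`. -/
theorem nD_downClosure_le {α σ : Type} [Fintype α] [Fintype σ] (M : NFA α σ) (n : ℕ)
    (hcard : Fintype.card σ = n) (q₀ : σ) (hstart : M.start = {q₀}) :
    nD (downClosure M.accepts) ≤ 2 ^ (n - 1) :=
  nD_downClosure_le_general M n hcard q₀ hstart
end

section
/- Exponential state complexity of upward closure over a binary alphabet: for every even n > 0, the language L_n = {c(i)^n | i ∈ H} over Σ = {a,b} is such that every DFA recognizing the upward closure ↑L_n has at least binomial(n+1, n/2) states, i.e., nD(↑L_n) ≥ C(n+1, n/2). -/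
/-- The word `c(i) = a^i b^(3n-i)` over the binary alphabet `Fin 2`
(`0` is the letter `a`, `1` is the letter `b`). -/
def cw (n i : ℕ) : List (Fin 2) := List.replicate i 0 ++ List.replicate (3*n - i) 1

/-- The morphism `c : H* → Σ*`, applied to a word `s` over `H ⊆ ℕ`. -/
def cword (n : ℕ) (s : List ℕ) : List (Fin 2) := (s.map (cw n)).flatten

/-- The morphism `d : H* → Σ*`, where `d(i) = c(i)c(i)`. -/
def dword (n : ℕ) (s : List ℕ) : List (Fin 2) := (s.map (fun i => cw n i ++ cw n i)).flatten

/-- The witness language `L_n = { c(i)^n | i ∈ H }` with `H = {n, …, 2n}`. -/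
def Lwit (n : ℕ) : Language (Fin 2) :=
  {w | ∃ i ∈ Finset.Icc n (2*n), w = (List.replicate n (cw n i)).flatten}


/-!
For `n = 2k` and a `k`-subset `S = {t} ∪ P` of `H`, let `u_S = c(t) d(P)`, where `d` doubles
every block. For `j ∈ H`, the word `u_S c(j)^k` lies in `↑L_n` iff `j ∈ S`. Indeed `c(j)` is a
subword of `c(p) c(p)` for all `j, p ∈ H`, so `u_S` contains `c(j)^k` when `j ∈ S`. Conversely,
in an embedding of `c(i)^m` into `c(l)` every block of `c(l)` is sorted (`a`s before `b`s), so no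
block meets two copies of `c(i)`, and a copy meeting only one block is that block, hence `c(i)`;
thus `2m ≤ |l| + #_i(l)`, which fails for `l = t P P j^k`. The words `u_S` therefore have pairwise
distinct left quotients, so a partial DFA needs `C(n+1, k)` states, and `↑L_n` is regular since
`L_n` is finite.
-/

namespace List

variable {α : Type*} [Preorder α]

theorem Pairwise.exists_eq_append_of_append_eq_append {A B y w : List α}
    (hA : A.Pairwise (· ≤ ·)) (hy : y ≠ []) (hdesc : ∀ b ∈ w.head?, b < y.getLast hy)
    (h : A ++ B = y ++ w) : ∃ y', y = A ++ y' ∧ B = y' ++ w := by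
  rcases append_eq_append_iff.1 h with ⟨y', hy', hB⟩ | ⟨_ | ⟨b, c⟩, hAc, hw⟩
  · exact ⟨y', hy', hB⟩
  · exact ⟨[], by simpa using hAc.symm, by simpa using hw.symm⟩
  · rw [hAc, pairwise_append] at hA
    exact absurd (hA.2.2 _ (getLast_mem hy) b mem_cons_self)
      (not_le_of_gt (hdesc b (by simp [hw])))

theorem exists_eq_cons_of_append_sublist_flatten {bs : List (List α)}
    (hbs : ∀ b ∈ bs, b.Pairwise (· ≤ ·)) {y w : List α} (hy : y ≠ [])
    (hdesc : ∀ b ∈ w.head?, b < y.getLast hy) (h : (y ++ w).Sublist bs.flatten) :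
    ∃ b bs', bs = b :: bs' ∧ w.Sublist bs'.flatten := by
  cases bs with
  | nil => exact absurd (sublist_nil.1 h) (by simp [hy])
  | cons b bs' =>
    obtain ⟨A, B, hAB, hA, hB⟩ := sublist_append_iff.1 (by simpa using h)
    obtain ⟨y', -, rfl⟩ :=
      ((hbs b mem_cons_self).sublist hA).exists_eq_append_of_append_eq_append hy hdesc hAB.symm
    exact ⟨b, bs', rfl, (sublist_append_right _ _).trans hB⟩

theorem eq_cons_or_eq_cons_cons_of_append_sublist_flatten {bs : List (List α)} {v w : List α}
    (hbs : ∀ b ∈ bs, b.Pairwise (· ≤ ·) ∧ b.length ≤ v.length) (hv : v ≠ [])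
    (hdesc : ∀ b ∈ w.head?, b < v.getLast hv) (h : (v ++ w).Sublist bs.flatten) :
    (∃ bs', bs = v :: bs' ∧ w.Sublist bs'.flatten) ∨
      ∃ b b' bs', bs = b :: b' :: bs' ∧ w.Sublist bs'.flatten := by
  cases bs with
  | nil => exact absurd (sublist_nil.1 h) (by simp [hv])
  | cons b bs =>
    obtain ⟨A, B, hAB, hA, hB⟩ := sublist_append_iff.1 (by simpa using h)
    obtain ⟨_ | ⟨c, y'⟩, hvA, rfl⟩ :=
      ((hbs b mem_cons_self).1.sublist hA).exists_eq_append_of_append_eq_append hv hdesc hAB.symm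
    · rw [append_nil] at hvA
      subst hvA
      exact .inl ⟨bs, by rw [hA.eq_of_length_le (hbs b mem_cons_self).2], by simpa using hB⟩
    · have hlast : (c :: y').getLast (cons_ne_nil c y') = v.getLast hv := by
        simp only [hvA, getLast_append_of_ne_nil _ (cons_ne_nil c y')]
      obtain ⟨b', bs', rfl, hw⟩ := exists_eq_cons_of_append_sublist_flatten
        (fun b hb => (hbs b (mem_cons_of_mem _ hb)).1) (cons_ne_nil c y')
        (hlast ▸ hdesc) hB
      exact .inr ⟨b, b', bs', rfl, hw⟩

theorem two_mul_le_length_add_count_of_flatten_replicate_sublist [DecidableEq α]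
    {v : List α} (hv : v ≠ []) (hdesc : v.head hv < v.getLast hv) {bs : List (List α)}
    (hbs : ∀ b ∈ bs, b.Pairwise (· ≤ ·) ∧ b.length ≤ v.length) {m : ℕ}
    (h : (replicate m v).flatten.Sublist bs.flatten) : 2 * m ≤ bs.length + bs.count v := by
  induction m generalizing bs with
  | zero => simp
  | succ m ih =>
    have hhead : ∀ b ∈ (replicate m v).flatten.head?, b < v.getLast hv := by
      cases m with
      | zero => simp
      | succ m => simpa [replicate_succ, head?_append, head?_eq_some_head hv] using hdesc
    rw [replicate_succ, flatten_cons] at h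
    rcases eq_cons_or_eq_cons_cons_of_append_sublist_flatten hbs hv hhead h with
      ⟨bs, rfl, hrest⟩ | ⟨b, b', bs, rfl, hrest⟩
    · have := ih (fun b hb => hbs b (mem_cons_of_mem _ hb)) hrest
      simp only [length_cons, count_cons_self]
      omega
    · have := ih (fun b hb => hbs b (mem_cons_of_mem _ (mem_cons_of_mem _ hb))) hrest
      have := count_le_count_cons (a := v) (b := b') (l := bs)
      have := count_le_count_cons (a := v) (b := b) (l := b' :: bs)
      simp only [length_cons]
      omega

end List

section Cword

open List

@[simp]
theorem cword_cons (n u : ℕ) (l : List ℕ) : cword n (u :: l) = cw n u ++ cword n l := by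
  simp [cword]

@[simp]
theorem cword_append (n : ℕ) (l₁ l₂ : List ℕ) :
    cword n (l₁ ++ l₂) = cword n l₁ ++ cword n l₂ := by
  simp [cword]

theorem cword_sublist_cword (n : ℕ) {l₁ l₂ : List ℕ} (h : l₁.Sublist l₂) :
    (cword n l₁).Sublist (cword n l₂) :=
  (h.map _).flatten

theorem cw_injective (n : ℕ) : Function.Injective (cw n) := fun i j h => by
  simpa [cw, count_replicate] using congrArg (count 0) h

theorem cw_sublist_cw_append_cw {n j p : ℕ} (hj : n ≤ j ∧ j ≤ 2 * n)
    (hp : n ≤ p ∧ p ≤ 2 * n) : (cw n j).Sublist (cw n p ++ cw n p) := by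
  unfold cw
  rcases le_or_gt j p with hjp | hpj
  · have hb : (replicate (3 * n - j) (1 : Fin 2)).Sublist
        (replicate (3 * n - p) 1 ++ replicate (3 * n - p) 1) := by
      rw [← replicate_add]; exact replicate_sublist_replicate _ |>.2 (by omega)
    rw [append_assoc]
    exact (replicate_sublist_replicate _ |>.2 hjp).append
      (hb.trans ((Sublist.refl _).append (sublist_append_right _ _)))
  · have ha : (replicate j (0 : Fin 2)).Sublist (replicate p 0 ++ replicate p 0) := by
      rw [← replicate_add]; exact replicate_sublist_replicate _ |>.2 (by omega)
    rw [← append_assoc, append_assoc (replicate p 0)]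
    exact (ha.trans ((Sublist.refl _).append (sublist_append_right _ _))).append
      (replicate_sublist_replicate 1 |>.2 (by omega : 3 * n - j ≤ 3 * n - p))

theorem two_mul_le_length_add_count_of_cword_sublist {n i m : ℕ} {l : List ℕ}
    (hi : 0 < i ∧ i < 3 * n) (hl : ∀ u ∈ l, u ≤ 3 * n)
    (h : (cword n (replicate m i)).Sublist (cword n l)) : 2 * m ≤ l.length + l.count i := by
  have hv : cw n i ≠ [] := by simp [cw]; omega
  have hdesc : (cw n i).head hv < (cw n i).getLast hv := by
    simp [cw, show i ≠ 0 by omega, show 3 * n - i ≠ 0 by omega]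
  have hbs : ∀ b ∈ l.map (cw n), b.Pairwise (· ≤ ·) ∧ b.length ≤ (cw n i).length := by
    simp only [mem_map, forall_exists_index, and_imp]
    rintro _ u hu rfl
    refine ⟨pairwise_append.2 ⟨by simp, by simp, ?_⟩, by simp [cw]; grind⟩
    simp only [mem_replicate]
    rintro _ ⟨-, rfl⟩ _ ⟨-, rfl⟩
    decide
  have := two_mul_le_length_add_count_of_flatten_replicate_sublist hv hdesc hbs
    (by simpa [cword, map_replicate] using h)
  rwa [length_map, count_map_of_injective _ _ (cw_injective n)] at this

end Cword

section FoolingWords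

open List

-- `cword n (doubleTail (t :: P))` is the paper's `c(t) d(P)`.
def doubleTail {α : Type*} : List α → List α
  | [] => []
  | a :: l => a :: l.flatMap (replicate 2)

variable {α : Type*}

theorem length_doubleTail (l : List α) : (doubleTail l).length = 2 * l.length - 1 := by
  cases l with
  | nil => rfl
  | cons a l => simp [doubleTail, length_flatMap]; omega

theorem mem_doubleTail {a : α} {l : List α} : a ∈ doubleTail l ↔ a ∈ l := by
  cases l <;> simp [doubleTail]

theorem count_flatMap_replicate_two [DecidableEq α] (a : α) (l : List α) :
    (l.flatMap (replicate 2)).count a = 2 * l.count a := by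
  induction l with
  | nil => simp
  | cons b l ih =>
    simp only [flatMap_cons, count_append, count_replicate, count_cons, ih]
    split_ifs <;> omega

theorem count_doubleTail_le_length [DecidableEq α] (a : α) {l : List α} (hl : l.Nodup) :
    (doubleTail l).count a ≤ l.length := by
  cases l with
  | nil => simp [doubleTail]
  | cons b l =>
    rw [nodup_cons] at hl
    have h1 := nodup_iff_count_le_one.1 hl.2 a
    have h2 : b = a → l.count a = 0 := fun h => count_eq_zero.2 (h ▸ hl.1)
    have h3 : l.count a ≤ l.length := count_le_length
    simp only [doubleTail, count_cons, count_flatMap_replicate_two, length_cons, beq_iff_eq]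
    split_ifs with hba
    · have := h2 hba; omega
    · omega

theorem cword_replicate_sublist_cword_flatMap {n j : ℕ} (hj : n ≤ j ∧ j ≤ 2 * n)
    {l : List ℕ} (hl : ∀ p ∈ l, n ≤ p ∧ p ≤ 2 * n) :
    (cword n (replicate (l.length + l.count j) j)).Sublist
      (cword n (l.flatMap (replicate 2))) := by
  induction l with
  | nil => simp
  | cons p l ih =>
    have ih := ih fun q hq => hl q (mem_cons_of_mem _ hq)
    by_cases hpj : p = j
    · subst hpj
      rw [length_cons, count_cons_self, show l.length + 1 + (l.count p + 1) =
        l.length + l.count p + 1 + 1 by omega]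
      simpa [replicate_succ] using ih
    · rw [length_cons, count_cons_of_ne hpj, show l.length + 1 + l.count j =
        l.length + l.count j + 1 by omega, replicate_succ, cword_cons]
      simpa using (cw_sublist_cw_append_cw hj (hl p mem_cons_self)).append ih

theorem cword_replicate_length_sublist_cword_doubleTail {n j : ℕ} {l : List ℕ}
    (hl : ∀ p ∈ l, n ≤ p ∧ p ≤ 2 * n) (hj : j ∈ l) :
    (cword n (replicate l.length j)).Sublist (cword n (doubleTail l)) := by
  obtain _ | ⟨t, P⟩ := l
  · simp at hj
  have hjH := hl j hj
  have hP := cword_replicate_sublist_cword_flatMap hjH fun q hq => hl q (mem_cons_of_mem _ hq)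
  rw [doubleTail, length_cons, cword_cons]
  rcases mem_cons.1 hj with rfl | hjP
  · rw [replicate_succ, cword_cons]
    exact (Sublist.refl _).append
      ((cword_sublist_cword n (replicate_sublist_replicate _ |>.2 (by omega))).trans hP)
  · have : 0 < P.count j := count_pos_iff.2 hjP
    exact (cword_sublist_cword n (replicate_sublist_replicate _ |>.2 (by omega))).trans
      (hP.trans (sublist_append_right _ _))

theorem mem_upClosure_Lwit {n : ℕ} {x : List (Fin 2)} :
    x ∈ upClosure (Lwit n) ↔ ∃ i, (n ≤ i ∧ i ≤ 2 * n) ∧ (cword n (replicate n i)).Sublist x := by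
  simp only [upClosure, Lwit, cword, map_replicate, Finset.mem_Icc]
  constructor
  · rintro ⟨_, ⟨i, hi, rfl⟩, h⟩
    exact ⟨i, hi, h⟩
  · rintro ⟨i, hi, h⟩
    exact ⟨_, ⟨i, hi, rfl⟩, h⟩

theorem cword_doubleTail_toList_append_mem_upClosure_iff {n k j : ℕ} {S : Finset ℕ}
    (hn : n = k + k) (hk : 0 < k) (hS : S ∈ (Finset.Icc n (2 * n)).powersetCard k)
    (hj : n ≤ j ∧ j ≤ 2 * n) :
    cword n (doubleTail S.toList) ++ cword n (replicate k j) ∈ upClosure (Lwit n) ↔ j ∈ S := by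
  obtain ⟨hSH, hcard⟩ := Finset.mem_powersetCard.1 hS
  have hl : ∀ p ∈ S.toList, n ≤ p ∧ p ≤ 2 * n := fun p hp =>
    Finset.mem_Icc.1 (hSH (Finset.mem_toList.1 hp))
  have hlen : S.toList.length = k := by rw [Finset.length_toList, hcard]
  rw [← Finset.mem_toList]
  refine ⟨fun h => ?_, fun hjS => mem_upClosure_Lwit.2 ⟨j, hj, ?_⟩⟩
  · obtain ⟨i, hi, hsub⟩ := mem_upClosure_Lwit.1 h
    by_contra hjS
    rw [← cword_append] at hsub
    have hbound := two_mul_le_length_add_count_of_cword_sublist (by omega) ?_ hsub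
    · have hcount : (doubleTail S.toList).count i + (replicate k j).count i ≤ k := by
        rw [count_replicate]
        split_ifs with hji
        · rw [beq_iff_eq] at hji
          simp [count_eq_zero.2 (mem_doubleTail.not.2 (hji ▸ hjS))]
        · simpa [hlen] using count_doubleTail_le_length i S.nodup_toList
      -- `4k ≤ |l| + #_i(l)`, but `|l| = 3k - 1` and `#_i(l) ≤ k`
      rw [length_append, count_append, length_doubleTail, length_replicate] at hbound
      omega
    · intro u hu
      rcases mem_append.1 hu with hu | hu
      · have := hl u (mem_doubleTail.1 hu); omega
      · rw [eq_of_mem_replicate hu]; omega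
  · rw [hn, replicate_add, cword_append, ← hn, ← hlen]
    exact (cword_replicate_length_sublist_cword_doubleTail hl hjS).append (Sublist.refl _)

end FoolingWords

section Regularity

variable {α : Type}

-- `r` is what remains of `w` after greedily embedding it into `x`.
theorem List.exists_isSuffix_forall_sublist_append_iff (x w : List α) :
    ∃ r, r <:+ w ∧ ∀ y, w.Sublist (x ++ y) ↔ r.Sublist y := by
  induction x generalizing w with
  | nil => exact ⟨w, List.suffix_refl w, fun y => Iff.rfl⟩
  | cons a x ih =>
    obtain _ | ⟨b, w⟩ := w
    · exact ⟨[], List.suffix_refl [], by simp⟩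
    by_cases hba : b = a
    · subst hba
      obtain ⟨r, hr, h⟩ := ih w
      exact ⟨r, hr.trans (List.suffix_cons b w), fun y => List.cons_sublist_cons.trans (h y)⟩
    · obtain ⟨r, hr, h⟩ := ih (b :: w)
      refine ⟨r, hr, fun y => ?_⟩
      rw [List.cons_append, List.sublist_cons_iff, ← h]
      simp [hba]

theorem exists_leftQuotient_upClosure_eq (L : Language α) (x : List α) :
    ∃ L' ⊆ {r | ∃ w ∈ L, r <:+ w}, (upClosure L).leftQuotient x = upClosure L' := by
  choose r hr h using fun w => List.exists_isSuffix_forall_sublist_append_iff x w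
  refine ⟨r '' L, Set.image_subset_iff.2 fun w hw => ⟨w, hw, hr w⟩, ?_⟩
  ext y
  change (∃ w ∈ L, w.Sublist (x ++ y)) ↔ ∃ w ∈ r '' L, w.Sublist y
  simp only [h]
  exact ⟨fun ⟨w, hw, h⟩ => ⟨r w, ⟨w, hw, rfl⟩, h⟩, fun ⟨_, ⟨w, hw, rfl⟩, h⟩ => ⟨w, hw, h⟩⟩

theorem isRegular_upClosure {L : Language α} (hL : L.Finite) : (upClosure L).IsRegular := by
  have hsuffixes : {r | ∃ w ∈ L, r <:+ w}.Finite := by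
    refine (hL.biUnion fun w _ => w.tails.finite_toSet).subset ?_
    rintro r ⟨w, hw, hrw⟩
    exact Set.mem_biUnion hw ((List.mem_tails r w).2 hrw)
  refine Language.isRegular_iff_finite_range_leftQuotient.2
    ((hsuffixes.powerset.image upClosure).subset ?_)
  rintro _ ⟨x, rfl⟩
  obtain ⟨L', hL', h⟩ := exists_leftQuotient_upClosure_eq L x
  exact ⟨L', hL', h.symm⟩

theorem finite_Lwit (n : ℕ) : (Lwit n).Finite :=
  ((Finset.Icc n (2 * n)).finite_toSet.image fun i => (List.replicate n (cw n i)).flatten).subset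
    fun _ ⟨i, hi, hw⟩ => ⟨i, hi, hw.symm⟩

end Regularity

section DeterministicAutomata

variable {α σ : Type*}

theorem DFA.toNFA_deterministic (M : DFA α σ) : M.toNFA.Deterministic :=
  ⟨⟨M.start, rfl⟩, fun _ _ => Set.subsingleton_singleton⟩

theorem NFA.Deterministic.eval_subsingleton {M : NFA α σ} (hM : M.Deterministic) (x : List α) :
    (M.eval x).Subsingleton := by
  induction x using List.reverseRecOn with
  | nil =>
    obtain ⟨q₀, hq₀⟩ := hM.1
    simp [hq₀]
  | append_singleton x a ih =>
    rw [NFA.eval_append_singleton]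
    intro q hq q' hq'
    obtain ⟨s, hs, hq⟩ := NFA.mem_stepSet.1 hq
    obtain ⟨s', hs', hq'⟩ := NFA.mem_stepSet.1 hq'
    exact hM.2 s' a (ih hs hs' ▸ hq) hq'

theorem NFA.leftQuotient_accepts_s10 (M : NFA α σ) (x : List α) :
    M.accepts.leftQuotient x = M.acceptsFrom (M.eval x) := by
  ext y
  exact M.append_mem_acceptsFrom

theorem NFA.Deterministic.card_le_of_injective_leftQuotient {ι : Type*} [Fintype ι] [Fintype σ]
    {M : NFA α σ} (hM : M.Deterministic) (u : ι → List α)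
    (hlive : ∀ i, ∃ z, u i ++ z ∈ M.accepts)
    (hinj : Function.Injective fun i => M.accepts.leftQuotient (u i)) :
    Fintype.card ι ≤ Fintype.card σ := by
  have hne : ∀ i, (M.eval (u i)).Nonempty := fun i => by
    obtain ⟨z, hz⟩ := hlive i
    rw [← Language.mem_leftQuotient, NFA.leftQuotient_accepts_s10] at hz
    obtain ⟨_, -, hq⟩ := hz
    obtain ⟨s, hs, -⟩ := NFA.mem_evalFrom_iff_exists.1 hq
    exact ⟨s, hs⟩
  choose q hq using hne
  refine Fintype.card_le_of_injective q fun i j hij => hinj ?_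
  have hsingleton : ∀ i, M.eval (u i) = {q i} := fun i =>
    (hM.eval_subsingleton _).eq_singleton_of_mem (hq i)
  simp only [NFA.leftQuotient_accepts_s10, hsingleton, hij]

end DeterministicAutomata

theorem le_nD {α : Type} {L : Language α} (hL : L.IsRegular) {N : ℕ}
    (h : ∀ (σ : Type) [Fintype σ] (M : NFA α σ), M.Deterministic → M.accepts = L →
      N ≤ Fintype.card σ) :
    N ≤ nD L := by
  obtain ⟨σ, _, M, hM⟩ := hL
  refine le_csInf ⟨_, σ, inferInstance, M.toNFA, M.toNFA_deterministic, rfl, ?_⟩ ?_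
  · rw [DFA.toNFA_correct, hM]
  · rintro _ ⟨σ, _, M, hdet, rfl, hacc⟩
    exact h σ M hdet hacc

/-- Exponential state complexity of upward closure over a binary alphabet: for even
`n > 0`, every DFA recognizing `↑L_n`, where `L_n = { c(i)^n | i ∈ H }`, has at
least `C(n+1, n/2)` states. -/
theorem upClosure_binary_lower_bound (n : ℕ) (hpos : 0 < n) (heven : Even n) :
    (n + 1).choose (n / 2) ≤ nD (upClosure (Lwit n)) := by
  obtain ⟨k, hn⟩ := heven
  have hk : 0 < k := by omega
  refine le_nD (isRegular_upClosure (finite_Lwit n)) fun σ _ M hM hacc => ?_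
  let H := Finset.Icc n (2 * n)
  have hcard := hM.card_le_of_injective_leftQuotient
    (fun S : H.powersetCard k => cword n (doubleTail S.1.toList))
    (fun S => ⟨(List.replicate n (cw n n)).flatten, hacc ▸
      ⟨_, ⟨n, Finset.mem_Icc.2 ⟨le_rfl, by omega⟩, rfl⟩, List.sublist_append_right _ _⟩⟩)
    (fun S T hST => Subtype.ext <| Finset.ext fun j => ?_)
  · rwa [Fintype.card_coe, Finset.card_powersetCard, Nat.card_Icc,
      show 2 * n + 1 - n = n + 1 by omega, show k = n / 2 by omega] at hcard
  · by_cases hj : j ∈ H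
    · have hj := Finset.mem_Icc.1 hj
      rw [← cword_doubleTail_toList_append_mem_upClosure_iff hn hk S.2 hj,
        ← cword_doubleTail_toList_append_mem_upClosure_iff hn hk T.2 hj, ← hacc]
      exact Set.ext_iff.1 hST _
    · exact iff_of_false (fun h => hj ((Finset.mem_powersetCard.1 S.2).1 h))
        (fun h => hj ((Finset.mem_powersetCard.1 T.2).1 h))
end

section
/- Let n be even and strictly positive, and let X and Y be subsets of H of size n/2 with X ≠ Y. Then there exists a word v ∈ Σ* such that w_X v ∈ ↓L_n and w_Y v ∉ ↓L_n. -/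
/-!
Write `T_m(j) = c(j)^m` and `|s|_j` for the number of occurrences of `j` in `s`. For a word
`s` over `H`, `c(s) ⊑ T_m(j)` holds exactly when `2|s| ≤ m + |s|_j`: a letter `q ≠ j` costs
two blocks (`c(q) ⊑ c(j)c(j)` but `c(q) ⋢ c(j)`) and the letter `j` costs one. For the lower
bound, an embedding of `c(q)c(s)` into `T_m(j)` can be cut at a block boundary, because the
block `a^j b^(3n-j)` has no subword `ba` while `c(q)` ends in `b` and `c(s)` starts with `a`.

For `i ∈ X \ Y` take `v = c(i)`, so that `w_Z v = c(s_Z)` with `s_Z = p_1 ⋯ p_{n/2} i`.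
Then `s_X` has length `n/2 + 1` and contains `i` twice, so it costs `n` blocks of `c(i)`,
while `s_Y` has no repeated letter, so it costs at least `n + 1` blocks of every `c(j)`.
-/

open List

section Blocks

variable {α : Type*}

theorem pair_sublist_replicate_append_replicate {a b c d : α} {j k : ℕ}
    (h : [c, d] <+ replicate j a ++ replicate k b) : c = a ∨ d = b := by
  obtain ⟨r₁, r₂, hcd, h₁, h₂⟩ := sublist_append_iff.mp h
  have ha : ∀ x ∈ r₁, x = a := fun x hx => eq_of_mem_replicate (h₁.subset hx)
  have hb : ∀ x ∈ r₂, x = b := fun x hx => eq_of_mem_replicate (h₂.subset hx)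
  match r₁, r₂, hcd with
  | [], _, rfl => exact Or.inr (hb d (by simp))
  | [_], _, rfl => exact Or.inl (ha c (by simp))
  | [_, _], _, rfl => exact Or.inl (ha c (by simp))

theorem exists_split_of_append_sublist_flatten_replicate {a b : α} {blk : List α}
    (hblk : ∀ c d, [c, d] <+ blk → c = a ∨ d = b) {u w : List α}
    (hu : u.getLast? ≠ some a) (hw : w.head? ≠ some b) {m : ℕ}
    (h : u ++ w <+ (replicate m blk).flatten) :
    ∃ m₁ m₂, m₁ + m₂ = m ∧ u <+ (replicate m₁ blk).flatten ∧
      w <+ (replicate m₂ blk).flatten := by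
  induction m generalizing u with
  | zero =>
    obtain ⟨rfl, rfl⟩ := append_eq_nil_iff.mp (sublist_nil.mp h)
    exact ⟨0, 0, rfl, Sublist.refl _, Sublist.refl _⟩
  | succ m ih =>
    rw [replicate_succ, flatten_cons, sublist_append_iff] at h
    obtain ⟨r₁, r₂, huw, h₁, h₂⟩ := h
    rcases append_eq_append_iff.mp huw with ⟨t, rfl, rfl⟩ | ⟨t, rfl, rfl⟩
    · cases t with
      | nil =>
        exact ⟨1, m, by omega, by simpa using h₁, by simpa using h₂⟩
      | cons d t =>
        obtain ⟨u, c, rfl⟩ | rfl := u.eq_nil_or_concat'.symm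
        · have hcd : [c, d] <+ blk :=
            (by simp : [c, d] <+ u ++ [c] ++ d :: t).trans h₁
          rcases hblk c d hcd with rfl | rfl <;> simp at hu hw
        · exact ⟨0, m + 1, by omega, by simp, by
            simpa [replicate_succ] using h₁.append h₂⟩
    · obtain ⟨m₁, m₂, hm, ht, hw⟩ := ih (fun h' => hu (by simp [getLast?_append, h'])) h₂
      exact ⟨m₁ + 1, m₂, by omega, by simpa [replicate_succ] using h₁.append ht, hw⟩

end Blocks

section Codewords

variable {n : ℕ}

theorem cw_ne_nil (hn : 0 < n) (q : ℕ) : cw n q ≠ [] := by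
  simp only [cw, ne_eq, append_eq_nil_iff, replicate_eq_nil_iff, not_and]
  omega

theorem getLast?_cw {q : ℕ} (hq : q < 3 * n) : (cw n q).getLast? = some 1 := by
  obtain ⟨r, hr⟩ : ∃ r, 3 * n - q = r + 1 := ⟨3 * n - q - 1, by omega⟩
  simp [cw, hr, replicate_succ']

theorem head?_cword {s : List ℕ} (hs : ∀ q ∈ s, 0 < q) : (cword n s).head? ≠ some 1 := by
  cases s with
  | nil => simp [cword]
  | cons q s =>
    obtain ⟨r, hr⟩ : ∃ r, q = r + 1 := ⟨q - 1, by have := hs q (by simp); omega⟩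
    simp [cword, cw, hr, replicate_succ]

theorem eq_of_cw_sublist_cw {q j : ℕ} (hj : j ≤ 3 * n)
    (h : cw n q <+ cw n j) : q = j := by
  have h₀ := h.count_le 0
  have h₁ := h.count_le 1
  simp [cw, count_replicate] at h₀ h₁
  omega

theorem cw_sublist_cw_append_cw_s12 {q i : ℕ} (hq : q ∈ Finset.Icc n (2 * n))
    (hi : i ∈ Finset.Icc n (2 * n)) : cw n q <+ cw n i ++ cw n i := by
  simp only [Finset.mem_Icc] at hq hi
  unfold cw
  rcases le_total i q with hiq | hqi
  · calc replicate q (0 : Fin 2) ++ replicate (3 * n - q) 1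
          <+ replicate i 0 ++ replicate i 0 ++ replicate (3 * n - i) 1 := by
            rw [← replicate_add]
            exact ((replicate_sublist_replicate _).2 (by omega)).append
              ((replicate_sublist_replicate _).2 (by omega))
      _ <+ _ := by
            simpa only [append_assoc] using
              ((sublist_append_right (replicate (3 * n - i) 1) _).append_right _).append_left _
  · calc replicate q (0 : Fin 2) ++ replicate (3 * n - q) 1
          <+ replicate i 0 ++ (replicate (3 * n - i) 1 ++ replicate (3 * n - i) 1) := by
            rw [← replicate_add]
            exact ((replicate_sublist_replicate _).2 (by omega)).append
              ((replicate_sublist_replicate _).2 (by omega))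
      _ <+ _ := by
            simpa only [append_assoc] using
              (((sublist_append_right (replicate i 0) _).append_left _).append_left _)

end Codewords

section Counting

variable {n i : ℕ}

theorem cword_sublist_flatten_replicate_cw (hi : i ∈ Finset.Icc n (2 * n)) {s : List ℕ}
    (hs : ∀ q ∈ s, q ∈ Finset.Icc n (2 * n)) {m : ℕ} (hm : 2 * s.length ≤ m + s.count i) :
    cword n s <+ (replicate m (cw n i)).flatten := by
  induction s generalizing m with
  | nil => simp [cword]
  | cons q s ih =>
    have hs' : ∀ r ∈ s, r ∈ Finset.Icc n (2 * n) := fun r hr => hs r (mem_cons_of_mem q hr)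
    have hq : cw n q <+ (replicate (if q = i then 1 else 2) (cw n i)).flatten := by
      split_ifs with hqi
      · simp [hqi]
      · simpa [replicate_succ] using cw_sublist_cw_append_cw_s12 (hs q mem_cons_self) hi
    have hle : s.count i ≤ s.length := count_le_length
    simp only [length_cons, count_cons, beq_iff_eq] at hm
    obtain ⟨m, rfl⟩ : ∃ m', m = (if q = i then 1 else 2) + m' :=
      ⟨m - if q = i then 1 else 2, by split_ifs at hm ⊢ <;> omega⟩
    have hrest := ih hs' (m := m) (by split_ifs at hm <;> omega)
    rw [replicate_add, flatten_append]
    simpa [cword] using hq.append hrest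

theorem two_le_of_cw_sublist_flatten_replicate_cw (hn : 0 < n) {q : ℕ} (hi : i ≤ 3 * n)
    {m : ℕ} (h : cw n q <+ (replicate m (cw n i)).flatten) :
    2 ≤ m + if q = i then 1 else 0 := by
  match m with
  | 0 => exact absurd (sublist_nil.mp h) (cw_ne_nil hn q)
  | 1 => simp [eq_of_cw_sublist_cw hi (by simpa using h)]
  | m + 2 => omega

theorem le_of_cword_sublist_flatten_replicate_cw (hn : 0 < n) (hi : i ∈ Finset.Icc n (2 * n))
    {s : List ℕ} (hs : ∀ q ∈ s, q ∈ Finset.Icc n (2 * n)) {m : ℕ}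
    (h : cword n s <+ (replicate m (cw n i)).flatten) : 2 * s.length ≤ m + s.count i := by
  induction s generalizing m with
  | nil => simp
  | cons q s ih =>
    have hq := Finset.mem_Icc.1 (hs q mem_cons_self)
    have hs' : ∀ r ∈ s, r ∈ Finset.Icc n (2 * n) := fun r hr => hs r (mem_cons_of_mem q hr)
    obtain ⟨m₁, m₂, rfl, hcq, hcs⟩ := exists_split_of_append_sublist_flatten_replicate
      (blk := cw n i) (fun c d hcd => pair_sublist_replicate_append_replicate hcd)
      (by rw [getLast?_cw (show q < 3 * n by omega)]; decide)
      (head?_cword fun r hr => by have := Finset.mem_Icc.1 (hs' r hr); omega)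
      (by simpa only [cword, map_cons, flatten_cons] using h)
    have h₁ := two_le_of_cw_sublist_flatten_replicate_cw hn (by simp at hi; omega) hcq
    have h₂ := ih hs' hcs
    simp only [length_cons, count_cons, beq_iff_eq]
    split_ifs at h₁ ⊢ <;> omega

theorem cword_sublist_flatten_replicate_cw_iff (hn : 0 < n) (hi : i ∈ Finset.Icc n (2 * n))
    {s : List ℕ} (hs : ∀ q ∈ s, q ∈ Finset.Icc n (2 * n)) {m : ℕ} :
    cword n s <+ (replicate m (cw n i)).flatten ↔ 2 * s.length ≤ m + s.count i :=
  ⟨le_of_cword_sublist_flatten_replicate_cw hn hi hs,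
    cword_sublist_flatten_replicate_cw hi hs⟩

end Counting

theorem mem_downClosure_Lwit {n : ℕ} {w : List (Fin 2)} :
    w ∈ downClosure (Lwit n) ↔
      ∃ j ∈ Finset.Icc n (2 * n), w <+ (replicate n (cw n j)).flatten := by
  simp only [downClosure, Lwit]
  constructor
  · rintro ⟨_, ⟨j, hj, rfl⟩, h⟩
    exact ⟨j, hj, h⟩
  · rintro ⟨j, hj, h⟩
    exact ⟨_, ⟨j, hj, rfl⟩, h⟩

/-- For even `n > 0` and distinct subsets `X ≠ Y` of `H` of size `n/2`, there is a
word `v` with `w_X v ∈ ↓L_n` and `w_Y v ∉ ↓L_n`, where `w_X = c(p_1 ⋯ p_{n/2})`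
lists the elements of `X` in increasing order. -/
theorem downClosure_separating_word (n : ℕ) (hpos : 0 < n) (heven : Even n)
    (X Y : Finset ℕ) (hX : X ⊆ Finset.Icc n (2 * n)) (hY : Y ⊆ Finset.Icc n (2 * n))
    (hXcard : X.card = n / 2) (hYcard : Y.card = n / 2) (hne : X ≠ Y) :
    ∃ v : List (Fin 2),
      cword n (X.sort (· ≤ ·)) ++ v ∈ downClosure (Lwit n) ∧
      cword n (Y.sort (· ≤ ·)) ++ v ∉ downClosure (Lwit n) := by
  obtain ⟨i, hiX, hiY⟩ : ∃ i ∈ X, i ∉ Y :=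
    Finset.not_subset.mp fun hXY => hne (Finset.eq_of_subset_of_card_le hXY (by omega))
  have hi := hX hiX
  have hcword (Z : Finset ℕ) :
      cword n (Z.sort (· ≤ ·)) ++ cw n i = cword n (Z.sort (· ≤ ·) ++ [i]) := by
    simp [cword]
  have hmem {Z : Finset ℕ} (hZ : Z ⊆ Finset.Icc n (2 * n)) :
      ∀ q ∈ Z.sort (· ≤ ·) ++ [i], q ∈ Finset.Icc n (2 * n) := by
    simp only [mem_append, Finset.mem_sort, mem_singleton]
    rintro q (hq | rfl)
    exacts [hZ hq, hi]
  have hlen {Z : Finset ℕ} (hZ : Z.card = n / 2) :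
      (Z.sort (· ≤ ·) ++ [i]).length = n / 2 + 1 := by
    simp [hZ]
  have hn : 2 * (n / 2) = n := Nat.two_mul_div_two_of_even heven
  refine ⟨cw n i, ?_, ?_⟩ <;> rw [hcword, mem_downClosure_Lwit]
  · refine ⟨i, hi, (cword_sublist_flatten_replicate_cw_iff hpos hi (hmem hX)).2 ?_⟩
    have hcount : (X.sort (· ≤ ·) ++ [i]).count i = 2 := by simp [hiX]
    rw [hlen hXcard, hcount]
    omega
  · rintro ⟨j, hj, h⟩
    have hnodup : (Y.sort (· ≤ ·) ++ [i]).Nodup := by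
      simpa [nodup_append, Y.sort_nodup] using hiY
    have hcount := nodup_iff_count_le_one.1 hnodup j
    have hcost := (cword_sublist_flatten_replicate_cw_iff hpos hj (hmem hY)).1 h
    rw [hlen hYcard] at hcost
    omega
end

section
/- Upper bound on the state complexity of interiors: let L ⊆ Σ* be a regular language recognized by an NFA with n states. Then both the upward interior ↑int L and the downward interior ↓int L are recognized by DFAs with strictly fewer than ψ(n) states, where ψ(n) is the n-th Dedekind number; i.e., nD(↑int L) < ψ(n) and nD(↓int L) < ψ(n). -/
/-- The `n`-th Dedekind number: the number of antichains in the lattice of subsets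
of an `n`-element set. -/
noncomputable def dedekind (n : ℕ) : ℕ :=
  Set.ncard {A : Finset (Finset (Fin n)) | IsAntichain (· ⊆ ·) (A : Set (Finset (Fin n)))}

/-!
After reading `x`, membership of `x` in `↑int L = {x | every superword of x is in L}` depends
only on the family of state sets `δ(I, y)` of the NFA over all superwords `y` of `x`, and only
through its upward closure, since "every member meets `F`" is a monotone condition. Because the
superwords of `x ++ z` are the concatenations of superwords of `x` and of `z`, this upward-closed
family after `x ++ [a]` is determined by the one after `x` and the letter `a`: it is the state of a
DFA. Its states are nonempty upper sets of `2^Q`, which correspond (via their minimal elements) to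
the nonempty antichains, of which there are `ψ(n) - 1`. Subwords and `↓int L` work the same way.
-/

open Set

section UpperSet

variable {P : Type*} [PartialOrder P]

theorem upperClosure_setOf_minimal [WellFoundedLT P] (U : UpperSet P) :
    upperClosure {x | Minimal (· ∈ U) x} = U := by
  ext x
  refine ⟨fun ⟨m, hm, hmx⟩ => U.upper hmx hm.prop, fun hx => ?_⟩
  obtain ⟨m, hmx, hm⟩ := exists_minimal_le_of_wellFoundedLT (· ∈ U) x hx
  exact ⟨m, hm, hmx⟩

theorem card_upperSet_ne_top_lt_card_antichain [Finite P] :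
    Nat.card {U : UpperSet P // U ≠ ⊤} <
      Nat.card {A : Finset P // IsAntichain (· ≤ ·) (A : Set P)} := by
  calc Nat.card {U : UpperSet P // U ≠ ⊤}
      < Nat.card (UpperSet P) := Finite.card_subtype_lt (x := ⊤) (not_not.2 rfl)
    _ ≤ Nat.card {A : Finset P // IsAntichain (· ≤ ·) (A : Set P)} := by
      let minimals (U : UpperSet P) : {A : Finset P // IsAntichain (· ≤ ·) (A : Set P)} :=
        ⟨(toFinite {x | Minimal (· ∈ U) x}).toFinset, by
          simpa using setOfPred_minimal_antichain (· ∈ U)⟩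
      refine Nat.card_le_card_of_injective minimals fun U V hUV => ?_
      have := congrArg (fun A => upperClosure (A.1 : Set P)) hUV
      simpa [minimals, upperClosure_setOf_minimal] using this

end UpperSet

theorem card_upperSet_set_ne_top_lt_dedekind {σ : Type*} [Fintype σ] {n : ℕ}
    (hn : Fintype.card σ = n) : Nat.card {U : UpperSet (Set σ) // U ≠ ⊤} < dedekind n := by
  let e : Set σ ≃o Finset (Fin n) :=
    (Fintype.equivFinOfCardEq hn).toOrderIsoSet.trans Fintype.finsetOrderIsoSet.symm
  have hcongr : Nat.card {U : UpperSet (Set σ) // U ≠ ⊤} =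
      Nat.card {U : UpperSet (Finset (Fin n)) // U ≠ ⊤} :=
    Nat.card_congr <| (UpperSet.map e).toEquiv.subtypeEquiv fun U => by simp
  rw [hcongr, dedekind, ← Nat.card_coe_set_eq]
  exact card_upperSet_ne_top_lt_card_antichain

theorem upperClosure_image2_upperClosure_left {P Q β : Type*} [Preorder P] [Preorder Q]
    {f : P → β → Q} (hf : ∀ b, Monotone (f · b)) (s : Set P) (t : Set β) :
    upperClosure (image2 f (upperClosure s) t) = upperClosure (image2 f s t) := by
  refine le_antisymm (upperClosure_anti (image2_subset_right subset_upperClosure)) ?_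
  refine upperClosure_min ?_ (UpperSet.upper _)
  rintro _ ⟨x, ⟨a, ha, hax⟩, b, hb, rfl⟩
  exact ⟨f a b, mem_image2_of_mem ha hb, hf b hax⟩

section DFA

variable {α Q : Type} (D : DFA α Q)

theorem DFA.nD_accepts_le_card [Fintype Q] : nD D.accepts ≤ Fintype.card Q :=
  Nat.sInf_le ⟨Q, inferInstance, D.toNFA,
    ⟨⟨D.start, rfl⟩, fun _ _ => subsingleton_singleton⟩, rfl, D.toNFA_correct⟩

def DFA.restrict_s15 (s : Set Q) (hstart : D.start ∈ s)
    (hstep : ∀ q ∈ s, ∀ a, D.step q a ∈ s) : DFA α s where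
  step q a := ⟨D.step q a, hstep q q.2 a⟩
  start := ⟨D.start, hstart⟩
  accept := Subtype.val ⁻¹' D.accept

variable {s : Set Q} {hstart : D.start ∈ s} {hstep : ∀ q ∈ s, ∀ a, D.step q a ∈ s}

theorem DFA.coe_restrict_evalFrom (q : s) (x : List α) :
    ((D.restrict_s15 s hstart hstep).evalFrom q x : Q) = D.evalFrom q x := by
  induction x generalizing q with
  | nil => rfl
  | cons a x ih => exact ih _

theorem DFA.restrict_accepts : (D.restrict_s15 s hstart hstep).accepts = D.accepts := by
  ext x
  exact Iff.of_eq (congrArg (· ∈ D.accept) (D.coe_restrict_evalFrom ⟨D.start, hstart⟩ x))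

theorem DFA.nD_accepts_le_card_of_step_mem [Finite Q] (s : Set Q) (hstart : D.start ∈ s)
    (hstep : ∀ q ∈ s, ∀ a, D.step q a ∈ s) : nD D.accepts ≤ Nat.card s := by
  have := Fintype.ofFinite s
  rw [← D.restrict_accepts (hstart := hstart) (hstep := hstep), Nat.card_eq_fintype_card]
  exact DFA.nD_accepts_le_card _

end DFA

namespace NFA

variable {α σ : Type*} (M : NFA α σ)

theorem evalFrom_mono_s15 (x : List α) : Monotone (M.evalFrom · x) := fun S T hST => by
  change M.evalFrom S x ⊆ M.evalFrom T x
  rw [evalFrom_eq_biUnion_singleton, evalFrom_eq_biUnion_singleton M T]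
  exact biUnion_subset_biUnion_left hST

def reachedSets (R : Language α) : UpperSet (Set σ) :=
  upperClosure (M.evalFrom M.start '' R)

theorem reachedSets_mul (R K : Language α) :
    M.reachedSets (R * K) = upperClosure (image2 M.evalFrom (M.reachedSets R) K) := by
  have : M.evalFrom M.start '' (R * K) = image2 M.evalFrom (M.evalFrom M.start '' R) K := by
    ext S
    constructor
    · rintro ⟨_, hyz, rfl⟩
      obtain ⟨y, hy, z, hz, rfl⟩ := Language.mem_mul.1 hyz
      exact ⟨_, mem_image_of_mem _ hy, z, hz, (evalFrom_append ..).symm⟩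
    · rintro ⟨_, ⟨y, hy, rfl⟩, z, hz, rfl⟩
      exact ⟨y ++ z, Language.mem_mul.2 ⟨y, hy, z, hz, rfl⟩, evalFrom_append ..⟩
  rw [reachedSets, reachedSets, this]
  exact (upperClosure_image2_upperClosure_left M.evalFrom_mono_s15 _ _).symm

def acceptingSets : Set (Set σ) := {S | ∃ q ∈ M.accept, q ∈ S}

theorem isUpperSet_acceptingSets : IsUpperSet M.acceptingSets :=
  fun _ _ hST ⟨q, hq, hqS⟩ => ⟨q, hq, hST hqS⟩

theorem reachedSets_subset_acceptingSets_iff {R : Language α} :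
    (M.reachedSets R : Set (Set σ)) ⊆ M.acceptingSets ↔ R ≤ M.accepts :=
  calc _ ↔ M.evalFrom M.start '' R ⊆ M.acceptingSets :=
        ⟨subset_upperClosure.trans, (upperClosure_min · M.isUpperSet_acceptingSets)⟩
    _ ↔ R ≤ M.accepts := image_subset_iff

def interiorDFA (W : List α → Language α) : DFA α (UpperSet (Set σ)) where
  step U a := upperClosure (image2 M.evalFrom U (W [a]))
  start := M.reachedSets (W [])
  accept := {U | (U : Set (Set σ)) ⊆ M.acceptingSets}

variable {W : List α → Language α} (hW : ∀ x y, W (x ++ y) = W x * W y)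
include hW

theorem interiorDFA_step_reachedSets (u : List α) (a : α) :
    (M.interiorDFA W).step (M.reachedSets (W u)) a = M.reachedSets (W (u ++ [a])) := by
  rw [hW, reachedSets_mul]
  rfl

theorem interiorDFA_eval (x : List α) : (M.interiorDFA W).eval x = M.reachedSets (W x) := by
  suffices ∀ u, (M.interiorDFA W).evalFrom (M.reachedSets (W u)) x = M.reachedSets (W (u ++ x)) by
    exact this []
  induction x with
  | nil => simp
  | cons a x ih =>
    intro u
    rw [DFA.evalFrom_cons, M.interiorDFA_step_reachedSets hW, ih]
    simp

theorem interiorDFA_accepts : (M.interiorDFA W).accepts = {x | W x ≤ M.accepts} := by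
  ext x
  exact (congrArg (· ∈ (M.interiorDFA W).accept) (M.interiorDFA_eval hW x)).to_iff.trans
    M.reachedSets_subset_acceptingSets_iff

end NFA

theorem NFA.nD_setOf_le_accepts_lt_dedekind {α σ : Type} [Fintype σ] (M : NFA α σ)
    {W : List α → Language α} (hW : ∀ x y, W (x ++ y) = W x * W y)
    (hW_nonempty : ∀ x, (W x).Nonempty) {n : ℕ} (hn : Fintype.card σ = n) :
    nD {x | W x ≤ M.accepts} < dedekind n := by
  rw [← M.interiorDFA_accepts hW]
  -- `⊤ : UpperSet _` is the empty family; it is never reached because every `W x` is nonempty.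
  refine lt_of_le_of_lt ((M.interiorDFA W).nD_accepts_le_card_of_step_mem {U | U ≠ ⊤} ?_ ?_)
    (card_upperSet_set_ne_top_lt_dedekind hn)
  · exact mt upperClosure_eq_top_iff.1 ((hW_nonempty []).image _).ne_empty
  · intro U hU a
    exact mt upperClosure_eq_top_iff.1
      ((UpperSet.coe_nonempty.2 hU).image2 (hW_nonempty [a])).ne_empty

namespace Language

variable {α : Type*}

def superwords (x : List α) : Language α := {y | x.Sublist y}

def subwords (x : List α) : Language α := {y | y.Sublist x}

theorem superwords_append (x z : List α) : superwords (x ++ z) = superwords x * superwords z := by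
  ext y
  rw [mem_mul]
  constructor
  · intro h
    obtain ⟨y₁, y₂, rfl, h₁, h₂⟩ := List.append_sublist_iff.1 h
    exact ⟨y₁, h₁, y₂, h₂, rfl⟩
  · rintro ⟨y₁, h₁, y₂, h₂, rfl⟩
    exact h₁.append h₂

theorem subwords_append (x z : List α) : subwords (x ++ z) = subwords x * subwords z := by
  ext y
  rw [mem_mul]
  constructor
  · intro h
    obtain ⟨y₁, y₂, rfl, h₁, h₂⟩ := List.sublist_append_iff.1 h
    exact ⟨y₁, h₁, y₂, h₂, rfl⟩
  · rintro ⟨y₁, h₁, y₂, h₂, rfl⟩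
    exact h₁.append h₂

end Language

theorem nD_interiors_lt_dedekind_general {α σ : Type} [Fintype σ]
    (M : NFA α σ) (n : ℕ) (hcard : Fintype.card σ = n) :
    nD (upInterior M.accepts) < dedekind n ∧
    nD (downInterior M.accepts) < dedekind n :=
  ⟨M.nD_setOf_le_accepts_lt_dedekind Language.superwords_append (fun x => ⟨x, .refl x⟩) hcard,
    M.nD_setOf_le_accepts_lt_dedekind Language.subwords_append (fun x => ⟨x, .refl x⟩) hcard⟩

/-- Upper bound on the state complexity of interiors: if `L` is recognized by an
NFA with `n` states, then both interiors are recognized by DFAs with strictly fewer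
than `ψ(n)` states, `ψ` being the Dedekind number function. -/
theorem nD_interiors_lt_dedekind {α σ : Type} [Fintype α] [Fintype σ]
    (M : NFA α σ) (n : ℕ) (hcard : Fintype.card σ = n) :
    nD (upInterior M.accepts) < dedekind n ∧
    nD (downInterior M.accepts) < dedekind n :=
  nD_interiors_lt_dedekind_general M n hcard
end
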